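/- arXiv:2002.01070 — 2 statements merged into one kernel-verified Lean document; each statement's English description precedes it below -/
import Mathlib

section
/- For {1,2}-distances, if the optimal (classical) TSP tour has exactly u edges of distance 2, then every 1-weighted TSP tour has cost at least n(n+1)/2 + u(u+1)/2. -/
open Finset

/-- Weighted TSP cost of the tour `π 0, π 1, …, π (n-1)` with node weights `w`. -/
noncomputable def wCost (n : ℕ) (d : Fin n → Fin n → ℝ) (w : Fin n → ℝ) (π : ℕ → Fin n) : ℝ :=
  d (π (n - 1)) (π 0) * (∑ j ∈ Finset.range n, w (π j)) +
    ∑ i ∈ Finset.range (n - 1), d (π i) (π (i + 1)) * (∑ j ∈ Finset.range (i + 1), w (π j))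

/-- 1-weighted TSP cost (all node weights equal to 1). -/
noncomputable def w1Cost (n : ℕ) (d : Fin n → Fin n → ℝ) (π : ℕ → Fin n) : ℝ :=
  (n : ℝ) * d (π (n - 1)) (π 0) +
    ∑ i ∈ Finset.range (n - 1), ((i : ℝ) + 1) * d (π i) (π (i + 1))

/-- Latency of the tour `π`. -/
noncomputable def latency (n : ℕ) (d : Fin n → Fin n → ℝ) (π : ℕ → Fin n) : ℝ :=
  ∑ i ∈ Finset.range (n - 1), ((n - (i + 1) : ℕ) : ℝ) * d (π i) (π (i + 1))

/-- `π` visits each of the `n` cities exactly once. -/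
def IsTour (n : ℕ) (π : ℕ → Fin n) : Prop :=
  Function.Bijective fun i : Fin n => π i.val

/-- Classical TSP tour length. -/
noncomputable def tspCost (n : ℕ) (d : Fin n → Fin n → ℝ) (π : ℕ → Fin n) : ℝ :=
  d (π (n - 1)) (π 0) + ∑ i ∈ Finset.range (n - 1), d (π i) (π (i + 1))

/-- Distance of the edge at (0-indexed) position `i` of the tour, position `n-1` being the closing edge. -/
noncomputable def edgeDist (n : ℕ) (d : Fin n → Fin n → ℝ) (π : ℕ → Fin n) (i : ℕ) : ℝ :=
  if i = n - 1 then d (π (n - 1)) (π 0) else d (π i) (π (i + 1))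

open Classical in
/-- Number of edges of distance 2 in the tour `π`. -/
noncomputable def numTwoEdges (n : ℕ) (d : Fin n → Fin n → ℝ) (π : ℕ → Fin n) : ℕ :=
  ((Finset.range n).filter fun i => edgeDist n d π i = 2).card

/-!
The 1-weighted cost charges the edge in position `i` (counting from 1) exactly `i` times its
length. With lengths in `{1, 2}` this is `n(n+1)/2` plus the sum of the positions of the 2-edges.
A tour has at least `u` of them, and `k` distinct positive positions sum to at least `k(k+1)/2`.
-/

lemma sum_range_cast_add_one (n : ℕ) : ∑ i ∈ range n, ((i : ℝ) + 1) = n * (n + 1) / 2 := by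
  induction n with
  | zero => simp
  | succ k ih => rw [sum_range_succ, ih]; push_cast; ring

lemma sum_range_card_le_sum_add_one (s : Finset ℕ) :
    ∑ i ∈ range #s, ((i : ℝ) + 1) ≤ ∑ i ∈ s, ((i : ℝ) + 1) := by
  have h := sum_range_le_sum (s := s.map Nat.castEmbedding) (c := 0) (by simp)
  simp only [card_map, sum_map, Nat.castEmbedding_apply, zero_add] at h
  have h' : ∑ i ∈ range #s, (i : ℝ) ≤ ∑ i ∈ s, (i : ℝ) := by
    simpa only [Int.cast_sum, Int.cast_natCast] using (Int.cast_le (R := ℝ)).2 h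
  simp only [sum_add_distrib, sum_const, card_range]
  linarith

lemma mul_add_one_div_two_le_sum_add_one {s : Finset ℕ} {k : ℕ} (hk : k ≤ #s) :
    (k : ℝ) * (k + 1) / 2 ≤ ∑ i ∈ s, ((i : ℝ) + 1) :=
  calc (k : ℝ) * (k + 1) / 2 = ∑ i ∈ range k, ((i : ℝ) + 1) := (sum_range_cast_add_one k).symm
    _ ≤ ∑ i ∈ range #s, ((i : ℝ) + 1) :=
      sum_le_sum_of_subset_of_nonneg (range_subset_range.2 hk) fun _ _ _ => by positivity
    _ ≤ ∑ i ∈ s, ((i : ℝ) + 1) := sum_range_card_le_sum_add_one s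

lemma sum_mul_eq_sum_add_sum_filter {ι : Type*} (s : Finset ι) (c f : ι → ℝ)
    [DecidablePred fun i => f i = 2] (hf : ∀ i ∈ s, f i = 1 ∨ f i = 2) :
    ∑ i ∈ s, c i * f i = ∑ i ∈ s, c i + ∑ i ∈ s with f i = 2, c i := by
  rw [sum_filter, ← sum_add_distrib]
  refine sum_congr rfl fun i hi => ?_
  rcases hf i hi with h | h
  · simp [h]
  · simp [h]; ring

lemma w1Cost_eq_sum_edgeDist (n : ℕ) (d : Fin n → Fin n → ℝ) (π : ℕ → Fin n) :
    w1Cost n d π = ∑ i ∈ range n, ((i : ℝ) + 1) * edgeDist n d π i := by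
  cases n with
  | zero => simp [w1Cost]
  | succ m =>
    rw [sum_range_succ, edgeDist, if_pos (by omega), w1Cost, Nat.add_sub_cancel, add_comm]
    congr 1
    · refine sum_congr rfl fun i hi => ?_
      rw [edgeDist, if_neg (by simp at hi; omega)]
    · push_cast; ring

lemma edgeDist_eq_one_or_two {n : ℕ} {d : Fin n → Fin n → ℝ}
    (h12 : ∀ i j, d i j = 1 ∨ d i j = 2) (π : ℕ → Fin n) (i : ℕ) :
    edgeDist n d π i = 1 ∨ edgeDist n d π i = 2 := by
  unfold edgeDist
  split <;> apply h12

theorem stmt10_general (n : ℕ) (d : Fin n → Fin n → ℝ)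
    (h12 : ∀ i j, d i j = 1 ∨ d i j = 2)
    (u : ℕ)
    (hmin : ∀ π : ℕ → Fin n, IsTour n π → u ≤ numTwoEdges n d π) :
    ∀ σ : ℕ → Fin n, IsTour n σ →
      (n : ℝ) * (n + 1) / 2 + (u : ℝ) * (u + 1) / 2 ≤ w1Cost n d σ := by
  intro σ hσ
  rw [w1Cost_eq_sum_edgeDist, sum_mul_eq_sum_add_sum_filter _ _ _
    fun i _ => edgeDist_eq_one_or_two h12 σ i, sum_range_cast_add_one]
  have hu : u ≤ #{i ∈ range n | edgeDist n d σ i = 2} := hmin σ hσ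
  linarith [mul_add_one_div_two_le_sum_add_one hu]

/-- for symmetric {1,2}-distances, if the optimal classical TSP tour has
exactly u edges of distance 2 (so every tour has at least u such edges), then every
1-weighted TSP tour has cost at least n(n+1)/2 + u(u+1)/2. -/
theorem stmt10 (n : ℕ) (hn : 1 ≤ n) (d : Fin n → Fin n → ℝ)
    (hsym : ∀ i j, d i j = d j i)
    (h12 : ∀ i j, d i j = 1 ∨ d i j = 2)
    (u : ℕ)
    (hopt : ∃ π : ℕ → Fin n, IsTour n π ∧ numTwoEdges n d π = u)
    (hmin : ∀ π : ℕ → Fin n, IsTour n π → u ≤ numTwoEdges n d π) :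
    ∀ σ : ℕ → Fin n, IsTour n σ →
      (n : ℝ) * (n + 1) / 2 + (u : ℝ) * (u + 1) / 2 ≤ w1Cost n d σ :=
  stmt10_general n d h12 u hmin
end

section
/- In the expanded instance with metric d̂, for any permutation σ of the copies, moving all copies of a city i (except the last-visited one, i_x) to immediately follow i_x does not increase the 1-weighted TSP cost. -/
/-!
Close the tour `u :: l` into the path `u :: l ++ [u]`, whose `j`-th edge carries the
multiplier `j + 1`; the first city `u` is not a copy of `i`, so it stays first. Split both
paths at `x`. Behind `x`, the moved copies are at distance `0` from `x` and interchangeable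
with it, so they only raise the multipliers of the remaining edges by their number, which
is exactly the shift they caused while sitting before `x`. In front of `x`, deleting a city
merges two edges into one (triangle inequality) and lowers the multipliers of all later
edges, which can only decrease the cost since distances are nonnegative.
-/

/-- 1-weighted TSP cost of a tour given as a list (with default element `a`, unused
since all accessed indices are in range). -/
noncomputable def w1CostList {α : Type*} (d : α → α → ℝ) (a : α) (L : List α) : ℝ :=
  (L.length : ℝ) * d (L.getD (L.length - 1) a) (L.getD 0 a) +
    ∑ i ∈ Finset.range (L.length - 1),
      ((i : ℝ) + 1) * d (L.getD i a) (L.getD (i + 1) a)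

open List

section PathCost

variable {α : Type*} (D : α → α → ℝ)

noncomputable def pathCost : ℕ → List α → ℝ
  | _, [] => 0
  | _, [_] => 0
  | k, a :: b :: l => k * D a b + pathCost (k + 1) (b :: l)

@[simp] lemma pathCost_nil (k : ℕ) : pathCost D k [] = 0 := rfl

@[simp] lemma pathCost_singleton (k : ℕ) (a : α) : pathCost D k [a] = 0 := rfl

@[simp] lemma pathCost_cons_cons (k : ℕ) (a b : α) (l : List α) :
    pathCost D k (a :: b :: l) = k * D a b + pathCost D (k + 1) (b :: l) := rfl

lemma sum_range_mul_getD_eq_pathCost (a : α) (L : List α) (k : ℕ) :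
    ∑ j ∈ Finset.range (L.length - 1), ((j : ℝ) + k) * D (L.getD j a) (L.getD (j + 1) a) =
      pathCost D k L := by
  induction L generalizing k with
  | nil => simp
  | cons b t ih =>
    cases t with
    | nil => simp
    | cons c l =>
      rw [pathCost_cons_cons, ← ih, length_cons, length_cons, Nat.add_sub_cancel,
        Finset.sum_range_succ']
      simp only [getD_cons_succ, getD_cons_zero, Nat.add_sub_cancel]
      push_cast
      rw [add_comm]
      congr 1
      · ring
      · exact Finset.sum_congr rfl fun j _ => by ring

lemma w1CostList_cons (a u : α) (l : List α) :
    w1CostList D a (u :: l) = pathCost D 1 (u :: l ++ [u]) := by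
  rw [← sum_range_mul_getD_eq_pathCost D a, w1CostList, length_append, length_singleton,
    Nat.add_sub_cancel, length_cons, Nat.add_sub_cancel, Finset.sum_range_succ, add_comm]
  have hlast : (u :: l ++ [u]).getD (l.length + 1) a = u := by
    rw [getD_append_right _ _ _ _ (by simp)]; simp
  congr 1
  · refine Finset.sum_congr rfl fun j hj => ?_
    have hj : j < l.length := Finset.mem_range.mp hj
    rw [getD_append _ _ _ _ (by simp; omega), getD_append _ _ _ _ (by simp; omega)]
    push_cast; ring
  · rw [getD_append _ _ _ _ (by simp), hlast]
    simp

lemma pathCost_append_cons (l₁ : List α) (a : α) (l₂ : List α) (k : ℕ) :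
    pathCost D k (l₁ ++ a :: l₂) =
      pathCost D k (l₁ ++ [a]) + pathCost D (k + l₁.length) (a :: l₂) := by
  induction l₁ generalizing k with
  | nil => simp
  | cons b t ih =>
    cases t with
    | nil => simp
    | cons c l =>
      simp only [cons_append] at ih ⊢
      rw [pathCost_cons_cons, pathCost_cons_cons, ih, ← add_assoc]
      congr 2
      simp only [length_cons]
      omega

lemma pathCost_cons_congr {c x : α} (h : ∀ y, D c y = D x y) (k : ℕ) (l : List α) :
    pathCost D k (c :: l) = pathCost D k (x :: l) := by
  cases l <;> simp [h]

lemma pathCost_cons_append_of_copies {x : α} {l : List α} (h0 : ∀ c ∈ l, D x c = 0)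
    (hcopy : ∀ c ∈ l, ∀ y, D c y = D x y) (k : ℕ) (r : List α) :
    pathCost D k (x :: (l ++ r)) = pathCost D (k + l.length) (x :: r) := by
  induction l generalizing k with
  | nil => simp
  | cons c l ih =>
    rw [cons_append, pathCost_cons_cons, h0 c mem_cons_self, mul_zero, zero_add,
      pathCost_cons_congr D (hcopy c mem_cons_self),
      ih (fun c' hc' => h0 c' (mem_cons_of_mem _ hc'))
        (fun c' hc' => hcopy c' (mem_cons_of_mem _ hc')),
      length_cons, Nat.add_assoc, Nat.add_comm 1]

variable {D}

lemma pathCost_mono (hD : ∀ u v, 0 ≤ D u v) {k k' : ℕ} (hk : k ≤ k') (L : List α) :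
    pathCost D k L ≤ pathCost D k' L := by
  induction L generalizing k k' with
  | nil => simp
  | cons a t ih =>
    cases t with
    | nil => simp
    | cons b l =>
      simp only [pathCost_cons_cons]
      gcongr
      · exact hD a b
      · exact ih (by omega)

lemma pathCost_le_cons_cons (hD : ∀ u v, 0 ≤ D u v) (htri : ∀ u v w, D u w ≤ D u v + D v w)
    (k : ℕ) (u a v : α) (l : List α) :
    pathCost D k (u :: v :: l) ≤ pathCost D k (u :: a :: v :: l) := by
  simp only [pathCost_cons_cons]
  have h1 := pathCost_mono hD (Nat.le_succ (k + 1)) (v :: l)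
  have h2 : (k : ℝ) * D u v ≤ k * D u a + k * D a v := by
    rw [← mul_add]; exact mul_le_mul_of_nonneg_left (htri u a v) (Nat.cast_nonneg k)
  have h3 : (k : ℝ) * D a v ≤ (k + 1 : ℕ) * D a v :=
    mul_le_mul_of_nonneg_right (by push_cast; linarith) (hD a v)
  linarith

lemma pathCost_le_of_sublist (hD : ∀ u v, 0 ≤ D u v) (htri : ∀ u v w, D u w ≤ D u v + D v w)
    {l₁ l₂ : List α} (h : l₁ <+ l₂) (k : ℕ) (u x : α) :
    pathCost D k (u :: (l₁ ++ [x])) ≤ pathCost D k (u :: (l₂ ++ [x])) := by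
  induction h generalizing k u with
  | slnil => rfl
  | cons a _ ih =>
    refine (ih k u).trans ?_
    obtain ⟨v, r, hvr⟩ :=
      exists_cons_of_ne_nil (append_ne_nil_of_right_ne_nil _ (cons_ne_nil x []))
    rw [cons_append, hvr]
    exact pathCost_le_cons_cons hD htri k u a v r
  | cons_cons a _ ih =>
    simp only [cons_append, pathCost_cons_cons]
    exact add_le_add_right (ih (k + 1) a) _

end PathCost

lemma ite_eq_zero_triangle {β : Type*} [DecidableEq β] {d : β → β → ℝ}
    (hnn : ∀ i j, 0 ≤ d i j) (htri : ∀ i j k, d i k ≤ d i j + d j k) (a b c : β) :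
    (if a = c then 0 else d a c) ≤
      (if a = b then 0 else d a b) + (if b = c then 0 else d b c) := by
  split_ifs <;> simp_all [add_nonneg]

theorem stmt15_general {α β : Type*} [DecidableEq β] (orig : α → β) (d : β → β → ℝ)
    (hnn : ∀ i j, 0 ≤ d i j)
    (htri : ∀ i j k, d i k ≤ d i j + d j k)
    (dh : α → α → ℝ)
    (hdh : ∀ u v, dh u v = if orig u = orig v then 0 else d (orig u) (orig v))
    (i : β) (x : α) (hx : orig x = i)
    (A B : List α)
    (hAhead : ∀ z, A.head? = some z → orig z ≠ i) :
    w1CostList dh x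
        ((A.filter fun z => orig z ≠ i) ++ x :: ((A.filter fun z => orig z = i) ++ B)) ≤
      w1CostList dh x (A ++ x :: B) := by
  rcases A with _ | ⟨u, T⟩
  · simp
  have hdh_nonneg : ∀ u v, 0 ≤ dh u v := fun u v => by
    rw [hdh]; split_ifs; exacts [le_rfl, hnn _ _]
  have hdh_triangle : ∀ u v w, dh u w ≤ dh u v + dh v w := fun u v w => by
    simpa only [hdh] using ite_eq_zero_triangle hnn htri (orig u) (orig v) (orig w)
  have hu : orig u ≠ i := hAhead u rfl
  rw [filter_cons_of_pos (by simpa using hu), filter_cons_of_neg (by simpa using hu),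
    cons_append, cons_append, w1CostList_cons, w1CostList_cons]
  set Tf := T.filter fun z => orig z ≠ i
  set Ti := T.filter fun z => orig z = i
  have hTi : ∀ c ∈ Ti, orig c = orig x := fun c hc => by
    rw [hx]; simpa using (mem_filter.mp hc).2
  have hlen : Tf.length + Ti.length = T.length := by
    rw [T.length_eq_length_filter_add fun z => decide (orig z ≠ i)]
    simp [Tf, Ti]
  calc pathCost dh 1 (u :: (Tf ++ x :: (Ti ++ B)) ++ [u])
      = pathCost dh 1 (u :: (Tf ++ [x])) +
          pathCost dh (1 + (T.length + 1)) (x :: (B ++ [u])) := by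
        rw [show u :: (Tf ++ x :: (Ti ++ B)) ++ [u] = (u :: Tf) ++ x :: (Ti ++ (B ++ [u])) by simp,
          pathCost_append_cons, pathCost_cons_append_of_copies dh
            (fun c hc => by rw [hdh, if_pos (hTi c hc).symm])
            (fun c hc y => by rw [hdh, hdh, hTi c hc])]
        congr 2
        simp only [length_cons]
        omega
    _ ≤ pathCost dh 1 (u :: (T ++ [x])) +
          pathCost dh (1 + (T.length + 1)) (x :: (B ++ [u])) := by
        gcongr
        exact pathCost_le_of_sublist hdh_nonneg hdh_triangle filter_sublist 1 u x
    _ = pathCost dh 1 (u :: (T ++ x :: B) ++ [u]) := by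
        rw [show u :: (T ++ x :: B) ++ [u] = (u :: T) ++ x :: (B ++ [u]) by simp,
          pathCost_append_cons, length_cons]
        rfl

/-- in the expanded instance (copies of cities with the induced
pseudometric, unit weights), given a tour `A ++ x :: B` whose start is not a copy of
city i, where x is the last-visited copy of city i (B contains no copies of i), moving
all other copies of i to immediately follow x does not increase the 1-weighted TSP
cost. -/
theorem stmt15 {α β : Type*} [DecidableEq β] (orig : α → β) (d : β → β → ℝ)
    (hnn : ∀ i j, 0 ≤ d i j) (hsym : ∀ i j, d i j = d j i)
    (hself : ∀ i, d i i = 0) (htri : ∀ i j k, d i k ≤ d i j + d j k)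
    (dh : α → α → ℝ)
    (hdh : ∀ u v, dh u v = if orig u = orig v then 0 else d (orig u) (orig v))
    (i : β) (x : α) (hx : orig x = i)
    (A B : List α)
    (hB : ∀ y ∈ B, orig y ≠ i)
    (hAne : A ≠ []) (hAhead : ∀ z, A.head? = some z → orig z ≠ i) :
    w1CostList dh x
        ((A.filter fun z => orig z ≠ i) ++ x :: ((A.filter fun z => orig z = i) ++ B)) ≤
      w1CostList dh x (A ++ x :: B) :=
  stmt15_general orig d hnn htri dh hdh i x hx A B hAhead
end
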